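/- arXiv:2204.10013 — 3 statements merged into one kernel-verified Lean document; each statement's English description precedes it below -/
import Mathlib

section
/- There exist a Tychonoff space X, a subset T ⊆ X, and f ∈ C(X) with Z(f) ∩ T = ∅ such that f is not bounded away from zero on some hard subset of T. Concretely: X = ℕ with the discrete topology, T = 2ℕ (the even numbers), and f : ℕ → ℝ defined by f(x) = 1/x for x ∈ T and f(x) = 0 otherwise; then Z(f) ∩ T = ∅ but f is not bounded away from zero on the hard set T itself. -/
open Set ContinuousMap

/-- Points of the Stone–Čech compactification belonging to the Hewitt
realcompactification: those `p` to which every real-valued continuous function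
on `Y` extends continuously (on the subspace `Y ∪ {p}` of `βY`). -/
def hewittSet (Y : Type*) [TopologicalSpace Y] : Set (StoneCech Y) :=
  {p | ∀ f : C(Y, ℝ), ∃ g : C((Set.range (stoneCechUnit : Y → StoneCech Y) ∪ {p} :
      Set (StoneCech Y)), ℝ), ∀ x : Y, g ⟨stoneCechUnit x, Or.inl ⟨x, rfl⟩⟩ = f x}

/-- The subspace `Y ∪ K` of `βY`, where `K = cl_{βY}(υY \ Y)`. -/
def hardCore (Y : Type*) [TopologicalSpace Y] : Set (StoneCech Y) :=
  Set.range (stoneCechUnit : Y → StoneCech Y) ∪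
    closure (hewittSet Y \ Set.range (stoneCechUnit : Y → StoneCech Y))

/-- `H ⊆ Y` is hard in `Y` if it is closed in the subspace `Y ∪ cl_{βY}(υY \ Y)`. -/
def IsHard {Y : Type*} [TopologicalSpace Y] (H : Set Y) : Prop :=
  IsClosed {p : hardCore Y | (p : StoneCech Y) ∈ stoneCechUnit '' H}

/-- `f` is bounded on every hard subset of `Y`, i.e. `f ∈ S(Y)`. -/
def HardBounded {Y : Type*} [TopologicalSpace Y] (f : C(Y, ℝ)) : Prop :=
  ∀ H : Set Y, IsHard H → ∃ M, ∀ x ∈ H, |f x| ≤ M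

/-- A space is realcompact iff it coincides with its Hewitt realcompactification. -/
def IsRealcompact (Y : Type*) [TopologicalSpace Y] : Prop :=
  hewittSet Y ⊆ Set.range (stoneCechUnit : Y → StoneCech Y)

/-- `T` is `C*`-embedded in `X`. -/
def CStarEmbedded {X : Type*} [TopologicalSpace X] (T : Set X) : Prop :=
  ∀ f : C(T, ℝ), (∃ M, ∀ x, |f x| ≤ M) → ∃ g : C(X, ℝ), ∀ x : T, g x = f x

/-- `T` is `S`-embedded in `X`: every hard-bounded continuous function on `T`
extends continuously to `X`. -/
def SEmbedded {X : Type*} [TopologicalSpace X] (T : Set X) : Prop :=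
  ∀ f : C(T, ℝ), (∀ H : Set T, IsHard H → ∃ M, ∀ x ∈ H, |f x| ≤ M) →
    ∃ g : C(X, ℝ), ∀ x : T, g x = f x

/-- `A` and `B` are completely separated in `X`. -/
def CompletelySeparatedIn (X : Type*) [TopologicalSpace X] (A B : Set X) : Prop :=
  ∃ h : C(X, ℝ), (∀ x ∈ A, h x = 1) ∧ (∀ x ∈ B, h x = 0) ∧ ∀ x, h x ∈ Set.Icc (0:ℝ) 1

/-- `g` is bounded away from zero on every hard subset of the subspace `T`. -/
def BddAwayOnHards {X : Type*} [TopologicalSpace X] (g : C(X, ℝ)) (T : Set X) : Prop :=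
  ∀ H : Set T, IsHard H → ∃ m > 0, ∀ x ∈ H, m ≤ |g x.1|
/-!
A continuous proper map `e : Y → ℝ` makes `Y` realcompact: if `p ∈ υY \ Y` and `g` extends `e`
to `Y ∪ {p}`, then near `p` the values of `e` stay within `1/2` of `g p`, so points of `Y` close
to `p` lie in the compact set `e ⁻¹' closedBall (g p) (1/2)`, whose image in `βY` is closed and
misses `p`. Hence `2ℕ`, properly embedded in `ℝ`, is realcompact, so `υ(2ℕ) \ 2ℕ = ∅` and `2ℕ`
is hard in itself, while `1/n` takes arbitrarily small values on it.
-/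

theorem IsProperMap.isRealcompact {Y : Type*} [TopologicalSpace Y] {e : Y → ℝ}
    (he : IsProperMap e) : IsRealcompact Y := by
  intro p hp
  by_contra hpY
  obtain ⟨g, hg⟩ := hp ⟨e, he.continuous⟩
  set P : (Set.range (stoneCechUnit : Y → StoneCech Y) ∪ {p} : Set (StoneCech Y)) :=
    ⟨p, Or.inr rfl⟩
  obtain ⟨U, hU, hUg⟩ := isOpen_induced_iff.mp
    (Metric.isOpen_ball.preimage g.continuous : IsOpen (g ⁻¹' Metric.ball (g P) (1 / 2)))
  have hpU : p ∈ U := by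
    change P ∈ Subtype.val ⁻¹' U
    rw [hUg]
    exact Metric.mem_ball_self (by norm_num)
  set C := stoneCechUnit '' (e ⁻¹' Metric.closedBall (g P) (1 / 2))
  have hC : IsClosed C :=
    ((he.isCompact_preimage (isCompact_closedBall _ _)).image continuous_stoneCechUnit).isClosed
  have hpC : p ∉ C := fun ⟨y, _, hy⟩ => hpY ⟨y, hy⟩
  obtain ⟨y, hyU, hyC⟩ := denseRange_stoneCechUnit.exists_mem_open (hU.sdiff hC) ⟨p, hpU, hpC⟩
  have hy : (⟨stoneCechUnit y, Or.inl ⟨y, rfl⟩⟩ : (Set.range stoneCechUnit ∪ {p} : Set _)) ∈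
      g ⁻¹' Metric.ball (g P) (1 / 2) := by
    rw [← hUg]
    exact hyU
  rw [Set.mem_preimage, hg] at hy
  exact hyC ⟨y, Metric.ball_subset_closedBall hy, rfl⟩

theorem IsRealcompact.hardCore_eq {Y : Type*} [TopologicalSpace Y] (hY : IsRealcompact Y) :
    hardCore Y = Set.range (stoneCechUnit : Y → StoneCech Y) := by
  rw [hardCore, Set.sdiff_eq_empty.mpr hY, closure_empty, Set.union_empty]

theorem IsRealcompact.isHard_univ {Y : Type*} [TopologicalSpace Y] (hY : IsRealcompact Y) :
    IsHard (Set.univ : Set Y) := by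
  have hall : ∀ p : hardCore Y, (p : StoneCech Y) ∈ stoneCechUnit '' Set.univ := fun p => by
    simpa only [Set.image_univ, hY.hardCore_eq] using p.2
  simp only [IsHard, hall, Set.ofPred_true, isClosed_univ]

theorem isRealcompact_natSubtype (s : Set ℕ) : IsRealcompact s :=
  (Nat.isClosedEmbedding_coe_real.comp
    (isClosed_discrete s).isClosedEmbedding_subtypeVal).isProperMap.isRealcompact

/-- counterexample without pseudocompactness: `X = ℕ` discrete,
`T = 2ℕ` (positive even numbers), `f x = 1/x` on `T` and `0` elsewhere. Then
`Z(f) ∩ T = ∅`, `T` is hard in itself, but `f` is not bounded away from zero on it. -/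
theorem counterexample_not_bddAway :
    ∃ f : C(ℕ, ℝ), (∀ n : ℕ, f n = if 0 < n ∧ Even n then (1 : ℝ) / n else 0) ∧
      (∀ n ∈ {n : ℕ | 0 < n ∧ Even n}, f n ≠ 0) ∧
      IsHard (Set.univ : Set {n : ℕ | 0 < n ∧ Even n}) ∧
      ¬ ∃ m > 0, ∀ x : {n : ℕ | 0 < n ∧ Even n}, m ≤ |f x.1| := by
  refine ⟨⟨fun n => if 0 < n ∧ Even n then (1 : ℝ) / n else 0, continuous_of_discreteTopology⟩,
    fun n => rfl, fun n (hn : 0 < n ∧ Even n) => ?_, (isRealcompact_natSubtype _).isHard_univ, ?_⟩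
  · rw [ContinuousMap.coe_mk, if_pos hn]
    exact one_div_ne_zero (Nat.cast_ne_zero.mpr hn.1.ne' : (n : ℝ) ≠ 0)
  · rintro ⟨m, hm, hbdd⟩
    obtain ⟨k, hk⟩ := exists_nat_one_div_lt hm
    have hn : 0 < 2 * (k + 1) ∧ Even (2 * (k + 1)) := ⟨by omega, even_two_mul _⟩
    have hfn := hbdd ⟨2 * (k + 1), hn⟩
    simp only [ContinuousMap.coe_mk, if_pos hn] at hfn
    have hsmall : |(1 : ℝ) / ↑(2 * (k + 1))| ≤ 1 / (k + 1) := by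
      rw [abs_of_pos (by positivity)]
      gcongr
      push_cast
      linarith
    linarith
end

section
/- Let X be a Tychonoff space and f ∈ S(X). If f is bounded away from zero on every hard subset of X, then f is nowhere zero, 1/f is continuous, 1/f is bounded on every hard subset of X, and hence f is a unit of the ring S(X). -/
open Set ContinuousMap

lemma isHard_singleton {Y : Type*} [TopologicalSpace Y] (y : Y) : IsHard ({y} : Set Y) := by
  have hpre : {p : hardCore Y | (p : StoneCech Y) ∈ stoneCechUnit '' ({y} : Set Y)}
      = (Subtype.val : hardCore Y → StoneCech Y) ⁻¹' {stoneCechUnit y} := by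
    ext p
    simp [Set.image_singleton]
  rw [IsHard, hpre]
  exact isClosed_singleton.preimage continuous_subtype_val

lemma ne_zero_of_bddAway_on_hards {Y : Type*} [TopologicalSpace Y] {f : Y → ℝ}
    (hb : ∀ H : Set Y, IsHard H → ∃ m > 0, ∀ x ∈ H, m ≤ |f x|) (y : Y) : f y ≠ 0 := by
  obtain ⟨m, hm, hle⟩ := hb {y} (isHard_singleton y)
  exact abs_pos.mp (hm.trans_le (hle y rfl))

lemma abs_inv_le_inv_of_le_abs {K : Type*} [Field K] [LinearOrder K] [IsStrictOrderedRing K]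
    {m a : K} (hm : 0 < m) (h : m ≤ |a|) : |a⁻¹| ≤ m⁻¹ := by
  rw [abs_inv]
  exact inv_anti₀ hm h

theorem unit_of_bddAway_general (X : Type*) [TopologicalSpace X] (f : C(X, ℝ))
    (hb : ∀ H : Set X, IsHard H → ∃ m > 0, ∀ x ∈ H, m ≤ |f x|) :
    (∀ x, f x ≠ 0) ∧ Continuous (fun x => (f x)⁻¹) ∧
      (∀ H : Set X, IsHard H → ∃ M, ∀ x ∈ H, |(f x)⁻¹| ≤ M) ∧
      ∃ g : C(X, ℝ), HardBounded g ∧ f * g = 1 := by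
  have hne : ∀ x, f x ≠ 0 := ne_zero_of_bddAway_on_hards hb
  have hcont : Continuous (fun x => (f x)⁻¹) := f.continuous.inv₀ hne
  have hinv : ∀ H : Set X, IsHard H → ∃ M, ∀ x ∈ H, |(f x)⁻¹| ≤ M := fun H hH => by
    obtain ⟨m, hm, hle⟩ := hb H hH
    exact ⟨m⁻¹, fun x hx => abs_inv_le_inv_of_le_abs hm (hle x hx)⟩
  refine ⟨hne, hcont, hinv, ⟨fun x => (f x)⁻¹, hcont⟩, hinv, ?_⟩
  ext x
  exact mul_inv_cancel₀ (hne x)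

/-- if `f ∈ S(X)` is bounded away from zero on every hard subset of `X`,
then `f` is nowhere zero, `1/f` is continuous and hard-bounded, and `f` is a unit
of `S(X)`. -/
theorem unit_of_bddAway (X : Type*) [TopologicalSpace X] [T35Space X]
    (f : C(X, ℝ)) (hf : HardBounded f)
    (hb : ∀ H : Set X, IsHard H → ∃ m > 0, ∀ x ∈ H, m ≤ |f x|) :
    (∀ x, f x ≠ 0) ∧ Continuous (fun x => (f x)⁻¹) ∧
      (∀ H : Set X, IsHard H → ∃ M, ∀ x ∈ H, |(f x)⁻¹| ≤ M) ∧
      ∃ g : C(X, ℝ), HardBounded g ∧ f * g = 1 :=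
  unit_of_bddAway_general X f hb
end

section
/- Let X be a Tychonoff space and T ⊆ X a C*-embedded subset. Then T is S-embedded in X if and only if for every f ∈ C(X) such that the restriction f|_T is a unit of the ring S(T), the sets Z(f) and T are completely separated in X. -/
open Set ContinuousMap

/-!
(⇒) If `f|_T` has inverse `g` in `S(T)` and `G ∈ C(X)` extends `g`, then `1 - f G` is `1` on `Z(f)`
and `0` on `T`.

(⇐) For `f ∈ S(T)` put `k = 1 / (1 + |f|)`. Both `k` and `f k` are bounded, so they extend to
`K, B ∈ C(X)`; moreover `k` is a unit of `S(T)` with inverse `1 + |f|`, so some `h` is `1` on `Z(K)`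
and `0` on `T`. Then `K² + h` never vanishes, and `B K (1 - h) / (K² + h)` is a continuous
extension of `B / K = f`.
-/

lemma completelySeparatedIn_of_eq_one_of_eq_zero {X : Type*} [TopologicalSpace X] {A B : Set X}
    (u : C(X, ℝ)) (hA : ∀ x ∈ A, u x = 1) (hB : ∀ x ∈ B, u x = 0) :
    CompletelySeparatedIn X A B := by
  refine ⟨⟨fun x => max 0 (min 1 (u x)), by fun_prop⟩, fun x hx => ?_, fun x hx => ?_,
    fun x => ⟨le_max_left _ _, max_le zero_le_one (min_le_left _ _)⟩⟩
  · simp [hA x hx]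
  · simp [hB x hx]

lemma exists_continuous_eq_div_of_completelySeparatedIn {X : Type*} [TopologicalSpace X]
    {T : Set X} (b k : C(X, ℝ)) (hsep : CompletelySeparatedIn X {x | k x = 0} T) :
    ∃ F : C(X, ℝ), ∀ x ∈ T, F x = b x / k x := by
  obtain ⟨h, h_one, h_zero, h_mem⟩ := hsep
  have hden : ∀ x, k x ^ 2 + h x ≠ 0 := by
    intro x
    by_cases hk : k x = 0
    · simp [hk, h_one x hk]
    · have hh : 0 ≤ h x := (h_mem x).1
      positivity
  refine ⟨⟨fun x => b x * k x * (1 - h x) / (k x ^ 2 + h x), by fun_prop (disch := exact hden _)⟩,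
    fun x hx => ?_⟩
  by_cases hk : k x = 0
  · simp [hk]
  · simp only [coe_mk, h_zero x hx, sub_zero, mul_one, add_zero]
    field_simp

section OneAddAbs

variable {Y : Type*} [TopologicalSpace Y]

noncomputable def invOneAddAbs (f : C(Y, ℝ)) : C(Y, ℝ) :=
  ⟨fun x => (1 + |f x|)⁻¹, (continuous_const.add f.continuous.abs).inv₀ fun _ =>
    (add_pos_of_pos_of_nonneg one_pos (abs_nonneg _)).ne'⟩

lemma invOneAddAbs_apply (f : C(Y, ℝ)) (x : Y) : invOneAddAbs f x = (1 + |f x|)⁻¹ := rfl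

lemma invOneAddAbs_pos (f : C(Y, ℝ)) (x : Y) : 0 < invOneAddAbs f x := by
  rw [invOneAddAbs_apply]
  positivity

lemma abs_invOneAddAbs_le_one (f : C(Y, ℝ)) (x : Y) : |invOneAddAbs f x| ≤ 1 := by
  rw [abs_of_pos (invOneAddAbs_pos f x), invOneAddAbs_apply]
  exact inv_le_one_of_one_le₀ (le_add_of_nonneg_right (abs_nonneg _))

lemma abs_mul_invOneAddAbs_le_one (f : C(Y, ℝ)) (x : Y) : |(f * invOneAddAbs f) x| ≤ 1 := by
  have hpos : 0 < 1 + |f x| := by positivity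
  rw [mul_apply, invOneAddAbs_apply, ← div_eq_mul_inv, abs_div, abs_of_pos hpos, div_le_one hpos]
  exact le_add_of_nonneg_left zero_le_one

lemma invOneAddAbs_mul_one_add_abs (f : C(Y, ℝ)) : invOneAddAbs f * (1 + |f|) = 1 := by
  ext x
  simp only [mul_apply, invOneAddAbs_apply, ContinuousMap.add_apply, one_apply, abs_apply]
  exact inv_mul_cancel₀ (by positivity)

end OneAddAbs

section HardBounded

variable {Y : Type*} [TopologicalSpace Y]

lemma HardBounded.of_forall_abs_le {f : C(Y, ℝ)} {M : ℝ} (hf : ∀ x, |f x| ≤ M) :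
    HardBounded f :=
  fun _ _ => ⟨M, fun x _ => hf x⟩

lemma HardBounded.one_add_abs {f : C(Y, ℝ)} (hf : HardBounded f) : HardBounded (1 + |f|) := by
  intro H hH
  obtain ⟨M, hM⟩ := hf H hH
  refine ⟨1 + M, fun x hx => ?_⟩
  rw [ContinuousMap.add_apply, one_apply, abs_apply, abs_of_pos (by positivity)]
  linarith [hM x hx]

end HardBounded

theorem sEmbedded_iff_unit_restrictions_separated_general (X : Type*) [TopologicalSpace X]
    (T : Set X) (hC : CStarEmbedded T) :
    SEmbedded T ↔ ∀ f : C(X, ℝ),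
      (HardBounded (f.restrict T) ∧
        ∃ g : C(T, ℝ), HardBounded g ∧ f.restrict T * g = 1) →
      CompletelySeparatedIn X {x | f x = 0} T := by
  constructor
  · rintro hS f ⟨-, g, hg, hfg⟩
    obtain ⟨G, hG⟩ := hS g hg
    refine completelySeparatedIn_of_eq_one_of_eq_zero (1 - f * G) (fun x hx => ?_) fun x hx => ?_
    · simp [show f x = 0 from hx]
    · have hfgx : f x * g ⟨x, hx⟩ = 1 := congr($hfg ⟨x, hx⟩)
      simp [hG ⟨x, hx⟩, hfgx]
  · intro hU f hf
    obtain ⟨B, hB⟩ := hC (f * invOneAddAbs f) ⟨1, abs_mul_invOneAddAbs_le_one f⟩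
    obtain ⟨K, hK⟩ := hC (invOneAddAbs f) ⟨1, abs_invOneAddAbs_le_one f⟩
    have hKT : K.restrict T = invOneAddAbs f := ext hK
    have hK_unit : HardBounded (K.restrict T) ∧
        ∃ g : C(T, ℝ), HardBounded g ∧ K.restrict T * g = 1 := by
      rw [hKT]
      exact ⟨.of_forall_abs_le (abs_invOneAddAbs_le_one f), 1 + |f|, HardBounded.one_add_abs hf,
        invOneAddAbs_mul_one_add_abs f⟩
    obtain ⟨F, hF⟩ := exists_continuous_eq_div_of_completelySeparatedIn B K (hU K hK_unit)
    refine ⟨F, fun x => ?_⟩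
    rw [hF x x.2, hB, hK, mul_apply, mul_div_cancel_right₀ _ (invOneAddAbs_pos f x).ne']

/-- a `C*`-embedded `T` is `S`-embedded iff for every `f ∈ C(X)` whose
restriction to `T` is a unit of `S(T)`, the sets `Z(f)` and `T` are completely separated. -/
theorem sEmbedded_iff_unit_restrictions_separated (X : Type*) [TopologicalSpace X]
    [T35Space X] (T : Set X) (hC : CStarEmbedded T) :
    SEmbedded T ↔ ∀ f : C(X, ℝ),
      (HardBounded (f.restrict T) ∧
        ∃ g : C(T, ℝ), HardBounded g ∧ f.restrict T * g = 1) →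
      CompletelySeparatedIn X {x | f x = 0} T :=
  sEmbedded_iff_unit_restrictions_separated_general X T hC
end
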